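/- arXiv:2204.13671 — 6 statements merged into one kernel-verified Lean document; each statement's English description precedes it below -/
import Mathlib

section
/- Let T ∈ (0, π/2) and α ∈ ℝ. If T < α < tan T, then the equation α·x = tan(T·x) has exactly one solution x in the open interval (0,1). If α ≤ T or α ≥ tan T, then the equation α·x = tan(T·x) has no solutions x in (0,1). -/
/-!
For `x > 0` the equation `α * x = tan (T * x)` says `g x = α` with `g x = tan (T * x) / x`.
Since `tan` is strictly convex on `[0, π/2)` and vanishes at `0`, its secant slopes
`tan y / y` increase strictly, so `g` is strictly increasing on `(0, 1]`. Moreover `g x → T`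
as `x → 0⁺` (the derivative of `tan (T * ·)` at `0`) and `g 1 = tan T`, so by continuity `g`
maps `(0, 1)` bijectively onto `(T, tan T)`.
-/

open Real Set Filter Topology

namespace Real

theorem strictConvexOn_tan : StrictConvexOn ℝ (Ico 0 (π / 2)) tan := by
  refine StrictMonoOn.strictConvexOn_of_deriv (convex_Ico _ _)
    (continuousOn_tan_Ioo.mono fun x hx => ⟨by linarith [hx.1, pi_pos], hx.2⟩) ?_
  rw [interior_Ico]
  intro x hx y hy hxy
  have hmem : ∀ z ∈ Ioo 0 (π / 2), z ∈ Icc 0 π := fun z hz =>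
    ⟨hz.1.le, by linarith [hz.2, pi_pos]⟩
  have hcos_pos : 0 < cos y := cos_pos_of_mem_Ioo ⟨by linarith [hy.1, pi_pos], hy.2⟩
  have hcos_lt : cos y < cos x := strictAntiOn_cos (hmem x hx) (hmem y hy) hxy
  simp only [deriv_tan]
  gcongr

theorem strictMonoOn_tan_div_self : StrictMonoOn (fun x => tan x / x) (Ioo 0 (π / 2)) := by
  intro x hx y hy hxy
  have h0 : (0 : ℝ) ∈ Ico 0 (π / 2) := ⟨le_rfl, by positivity⟩
  simpa using strictConvexOn_tan.secant_strict_mono h0 (Ioo_subset_Ico_self hx)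
    (Ioo_subset_Ico_self hy) hx.1.ne' hy.1.ne' hxy

theorem tendsto_tan_const_mul_div_self (T : ℝ) :
    Tendsto (fun x => tan (T * x) / x) (𝓝[≠] 0) (𝓝 T) := by
  have hderiv : HasDerivAt (fun x => tan (T * x)) T 0 := by
    simpa [Function.comp_def] using
      (hasDerivAt_tan (by simp)).comp (0 : ℝ) ((hasDerivAt_id (0 : ℝ)).const_mul T)
  have hslope : slope (fun x => tan (T * x)) 0 = fun x => tan (T * x) / x := by
    ext x
    simp [slope_def_field]
  simpa [hslope] using hasDerivAt_iff_tendsto_slope.1 hderiv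

section ScaledSlope

variable {T : ℝ} (hT0 : 0 < T) (hT : T < π / 2)
include hT0 hT

theorem mul_mem_Ioo_zero_pi_div_two {x : ℝ} (hx : x ∈ Ioc 0 1) : T * x ∈ Ioo 0 (π / 2) :=
  ⟨mul_pos hT0 hx.1, by nlinarith [hx.2]⟩

theorem strictMonoOn_tan_const_mul_div_self :
    StrictMonoOn (fun x => tan (T * x) / x) (Ioc 0 1) := by
  have hscale : ∀ x ≠ 0, tan (T * x) / x = T * (tan (T * x) / (T * x)) := fun x hx => by
    field_simp
  intro x hx y hy hxy
  simp only [hscale x hx.1.ne', hscale y hy.1.ne']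
  exact mul_lt_mul_of_pos_left (strictMonoOn_tan_div_self (mul_mem_Ioo_zero_pi_div_two hT0 hT hx)
    (mul_mem_Ioo_zero_pi_div_two hT0 hT hy) (by gcongr)) hT0

theorem continuousOn_tan_const_mul_div_self :
    ContinuousOn (fun x => tan (T * x) / x) (Ioc 0 1) := by
  refine ContinuousOn.div ?_ continuousOn_id fun x hx => hx.1.ne'
  exact continuousOn_tan_Ioo.comp (continuous_const_mul T).continuousOn fun x hx =>
    Ioo_subset_Ioo_left (by linarith [pi_pos]) (mul_mem_Ioo_zero_pi_div_two hT0 hT hx)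

end ScaledSlope

end Real

theorem exists_mem_Ioo_eq_of_tendsto_nhdsGT {α δ : Type*} [ConditionallyCompleteLinearOrder α]
    [TopologicalSpace α] [OrderTopology α] [DenselyOrdered α] [LinearOrder δ]
    [TopologicalSpace δ] [OrderClosedTopology δ] {f : α → δ} {a b : α} {l c : δ}
    (hab : a < b) (hf : ContinuousOn f (Ioc a b)) (hl : Tendsto f (𝓝[>] a) (𝓝 l))
    (hlc : l < c) (hcb : c < f b) : ∃ x ∈ Ioo a b, f x = c := by
  have := nhdsGT_neBot_of_exists_gt ⟨b, hab⟩
  obtain ⟨x₀, hx₀c, hx₀⟩ := ((hl.eventually_lt_const hlc).and (Ioo_mem_nhdsGT hab)).exists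
  obtain ⟨x, hx, hfx⟩ := intermediate_value_Ioo hx₀.2.le
    (hf.mono (Icc_subset_Ioc_iff hx₀.2.le |>.2 ⟨hx₀.1, le_rfl⟩)) ⟨hx₀c, hcb⟩
  exact ⟨x, ⟨hx₀.1.trans hx.1, hx.2⟩, hfx⟩

theorem tan_line_intersection (T α : ℝ) (hT0 : 0 < T) (hT : T < Real.pi / 2) :
    (T < α → α < Real.tan T →
      ∃! x, x ∈ Set.Ioo (0:ℝ) 1 ∧ α * x = Real.tan (T * x)) ∧
    (α ≤ T ∨ Real.tan T ≤ α →
      ∀ x ∈ Set.Ioo (0:ℝ) 1, α * x ≠ Real.tan (T * x)) := by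
  set g : ℝ → ℝ := fun x => tan (T * x) / x
  have hg_mono : StrictMonoOn g (Ioc 0 1) := strictMonoOn_tan_const_mul_div_self hT0 hT
  have hsol : ∀ x ∈ Ioo (0 : ℝ) 1, α * x = tan (T * x) ↔ g x = α := fun x hx => by
    rw [div_eq_iff hx.1.ne']
    exact eq_comm
  have hg_one : g 1 = tan T := by simp [g]
  constructor
  · intro hα hα'
    obtain ⟨c, hc, hgc⟩ := exists_mem_Ioo_eq_of_tendsto_nhdsGT one_pos
      (continuousOn_tan_const_mul_div_self hT0 hT)
      ((tendsto_tan_const_mul_div_self T).mono_left (nhdsGT_le_nhdsNE 0)) hα (by simpa using hα')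
    refine ⟨c, ⟨hc, (hsol c hc).2 hgc⟩, fun y ⟨hy, hyα⟩ => ?_⟩
    exact hg_mono.injOn (Ioo_subset_Ioc_self hy) (Ioo_subset_Ioc_self hc)
      (((hsol y hy).1 hyα).trans hgc.symm)
  · rintro (hα | hα) x hx hxα
    · have := lt_tan (mul_pos hT0 hx.1) (mul_mem_Ioo_zero_pi_div_two hT0 hT (Ioo_subset_Ioc_self hx)).2
      have := mul_le_mul_of_nonneg_right hα hx.1.le
      linarith
    · have := hg_mono (Ioo_subset_Ioc_self hx) ⟨one_pos, le_rfl⟩ hx.2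
      rw [(hsol x hx).1 hxα, hg_one] at this
      linarith
end

section
/- Let T ∈ (0, π/2) and α ∈ ℝ. If α > cot T, then the equation α·x = cot(T·x) has exactly one solution x in the open interval (0,1). If α ≤ cot T, then the equation α·x = cot(T·x) has no solutions x in (0,1). -/
open Real

theorem cot_line_intersection (T α : ℝ) (hT0 : 0 < T) (hT : T < Real.pi / 2) :
    (Real.cot T < α →
      ∃! x, x ∈ Set.Ioo (0:ℝ) 1 ∧ α * x = Real.cot (T * x)) ∧
    (α ≤ Real.cot T →
      ∀ x ∈ Set.Ioo (0:ℝ) 1, α * x ≠ Real.cot (T * x)) := by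
  have hpi := Real.pi_pos
  have hsinT : 0 < Real.sin T := Real.sin_pos_of_pos_of_lt_pi hT0 (by linarith)
  have hcosT : 0 < Real.cos T :=
    Real.cos_pos_of_mem_Ioo ⟨by linarith, hT⟩
  have hcotT : Real.cot T = Real.cos T / Real.sin T := Real.cot_eq_cos_div_sin T
  have hcotTpos : 0 < Real.cot T := by rw [hcotT]; positivity
  -- basic facts for x ∈ (0,1)
  have hx' : ∀ x ∈ Set.Ioo (0:ℝ) 1,
      0 < T * x ∧ T * x < Real.pi / 2 ∧ 0 < Real.sin (T * x) ∧ 0 < Real.cos (T * x) := by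
    intro x hx
    obtain ⟨hx0, hx1⟩ := hx
    have h1 : 0 < T * x := by positivity
    have h2 : T * x < Real.pi / 2 := by nlinarith
    have h3 : 0 < Real.sin (T * x) := Real.sin_pos_of_pos_of_lt_pi h1 (by linarith)
    have h4 : 0 < Real.cos (T * x) := Real.cos_pos_of_mem_Ioo ⟨by linarith, h2⟩
    exact ⟨h1, h2, h3, h4⟩
  constructor
  · intro hα
    have hα0 : 0 < α := hcotTpos.trans hα
    set g : ℝ → ℝ := fun x => α * x * Real.sin (T * x) - Real.cos (T * x) with hg
    have hgc : Continuous g := by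
      simp only [hg]
      fun_prop
    have hg0 : g 0 = -1 := by simp [hg]
    have hg1 : 0 < g 1 := by
      have : Real.cos T < α * Real.sin T := by
        rw [hcotT, div_lt_iff₀ hsinT] at hα; linarith
      simp only [hg, mul_one]
      linarith
    -- equivalence
    have key : ∀ x ∈ Set.Ioo (0:ℝ) 1, (α * x = Real.cot (T * x) ↔ g x = 0) := by
      intro x hx
      obtain ⟨_, _, hs, _⟩ := hx' x hx
      rw [Real.cot_eq_cos_div_sin, eq_div_iff hs.ne']
      constructor <;> intro h <;> simp only [hg] at * <;> linarith
    -- existence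
    have hmem : (0:ℝ) ∈ Set.Ioo (g 0) (g 1) := by rw [hg0]; exact ⟨by norm_num, hg1⟩
    obtain ⟨c, hc, hgc0⟩ := intermediate_value_Ioo (le_of_lt one_pos) hgc.continuousOn hmem
    refine ⟨c, ⟨hc, (key c hc).2 hgc0⟩, ?_⟩
    rintro y ⟨hy, hyeq⟩
    -- uniqueness: both zeros of g, and g strictly "monotone" across crossings
    have mono : ∀ u v, u ∈ Set.Ioo (0:ℝ) 1 → v ∈ Set.Ioo (0:ℝ) 1 → u < v →
        g u = 0 → g v = 0 → False := by
      intro u v hu hv huv hgu hgv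
      obtain ⟨hu1, hu2, hsu, hcu⟩ := hx' u hu
      obtain ⟨hv1, hv2, hsv, hcv⟩ := hx' v hv
      have hTuv : T * u < T * v := by nlinarith [hu.1]
      have hsin : Real.sin (T * u) < Real.sin (T * v) :=
        Real.strictMonoOn_sin ⟨by linarith, by linarith⟩ ⟨by linarith, by linarith⟩ hTuv
      have hcos : Real.cos (T * v) < Real.cos (T * u) :=
        Real.strictAntiOn_cos ⟨by linarith, by linarith⟩ ⟨by linarith, by linarith⟩ hTuv
      have h1 : α * u * Real.sin (T * u) < α * v * Real.sin (T * v) :=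
        mul_lt_mul (mul_lt_mul_of_pos_left huv hα0) hsin.le hsu
          (mul_pos hα0 hv.1).le
      simp only [hg] at hgu hgv
      nlinarith
    rcases lt_trichotomy y c with h | h | h
    · exact absurd ((key y hy).1 hyeq) (fun hz => mono y c hy hc h hz hgc0)
    · exact h
    · exact absurd ((key y hy).1 hyeq) (fun hz => mono c y hc hy h hgc0 hz)
  · intro hα x hx heq
    obtain ⟨h1, h2, hs, hc⟩ := hx' x hx
    have hTx : T * x < T := by nlinarith [hx.2, hx.1]
    have hsin : Real.sin (T * x) < Real.sin T :=
      Real.strictMonoOn_sin ⟨by linarith, by linarith⟩ ⟨by linarith, le_of_lt hT⟩ hTx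
    have hcos : Real.cos T < Real.cos (T * x) :=
      Real.strictAntiOn_cos ⟨by linarith, by linarith⟩ ⟨by linarith, by linarith⟩ hTx
    have hcotlt : Real.cot T < Real.cot (T * x) := by
      rw [hcotT, Real.cot_eq_cos_div_sin, div_lt_div_iff₀ hsinT hs]
      nlinarith
    have hlt : α * x < Real.cot (T * x) := by
      rcases le_or_gt α 0 with hneg | hpos
      · have : α * x ≤ 0 := mul_nonpos_of_nonpos_of_nonneg hneg (le_of_lt hx.1)
        calc α * x ≤ 0 := this
          _ < Real.cot (T * x) := by
              rw [Real.cot_eq_cos_div_sin]; positivity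
      · have : α * x ≤ α := by nlinarith [hx.2]
        linarith
    exact absurd heq (ne_of_lt hlt)
end

section
/- Let φ_W, T ∈ ℝ and a > 0, and suppose sin(2aT)·sin(2φ_W) ≠ 0. Then F¹_{φ_W,T}(a) = 0 if and only if a = −tan(φ_W)·cot(aT) or a = −cot(φ_W)·tan(aT); equivalently, a is a root of F¹_{φ_W,T} if and only if x = a solves the equation −x·cot φ_W = cot(xT) or the equation −x·tan φ_W = tan(xT). -/
open Real

/-- The determinant function
`F¹_{φ_W,T}(a) = -2a - a² sin(2aT) sin(2φ_W) - sin(2aT) sin(2φ_W) + 2a cos(2aT) cos(2φ_W)`. -/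
noncomputable def F1 (φW T a : ℝ) : ℝ :=
  -2 * a - a ^ 2 * Real.sin (2 * a * T) * Real.sin (2 * φW)
    - Real.sin (2 * a * T) * Real.sin (2 * φW)
    + 2 * a * Real.cos (2 * a * T) * Real.cos (2 * φW)

theorem F1_roots_characterization (φW T a : ℝ) (ha : 0 < a)
    (hne : Real.sin (2 * a * T) * Real.sin (2 * φW) ≠ 0) :
    F1 φW T a = 0 ↔
      (-a * Real.cot φW = Real.cot (a * T) ∨ -a * Real.tan φW = Real.tan (a * T)) := by
  have hA : Real.sin (2 * a * T) ≠ 0 := fun h => hne (by rw [h]; ring)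
  have hB : Real.sin (2 * φW) ≠ 0 := fun h => hne (by rw [h]; ring)
  rw [show (2 : ℝ) * a * T = 2 * (a * T) by ring, Real.sin_two_mul] at hA
  rw [Real.sin_two_mul] at hB
  have hs : Real.sin (a * T) ≠ 0 := fun h => hA (by rw [h]; ring)
  have hc : Real.cos (a * T) ≠ 0 := fun h => hA (by rw [h]; ring)
  have hsφ : Real.sin φW ≠ 0 := fun h => hB (by rw [h]; ring)
  have hcφ : Real.cos φW ≠ 0 := fun h => hB (by rw [h]; ring)
  have h1 : Real.sin (a * T) ^ 2 + Real.cos (a * T) ^ 2 = 1 := Real.sin_sq_add_cos_sq _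
  have h2 : Real.sin φW ^ 2 + Real.cos φW ^ 2 = 1 := Real.sin_sq_add_cos_sq _
  have key : F1 φW T a =
      -4 * (a * Real.sin (a * T) * Real.cos φW + Real.cos (a * T) * Real.sin φW)
        * (a * Real.cos (a * T) * Real.sin φW + Real.sin (a * T) * Real.cos φW) := by
    unfold F1
    rw [show (2 : ℝ) * a * T = 2 * (a * T) by ring, Real.sin_two_mul, Real.sin_two_mul,
      Real.cos_two_mul, Real.cos_two_mul]
    linear_combination (4 * a * Real.cos φW ^ 2) * h1 + (4 * a * Real.cos (a * T) ^ 2) * h2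
  rw [key, Real.cot_eq_cos_div_sin, Real.cot_eq_cos_div_sin, Real.tan_eq_sin_div_cos,
    Real.tan_eq_sin_div_cos]
  constructor
  · intro h
    rcases mul_eq_zero.1 h with h' | h'
    · rcases mul_eq_zero.1 h' with h'' | h''
      · norm_num at h''
      · left
        field_simp
        linear_combination -h''
    · right
      field_simp
      linear_combination -h'
  · rintro (h | h)
    · field_simp at h
      have : a * Real.sin (a * T) * Real.cos φW + Real.cos (a * T) * Real.sin φW = 0 := by
        linear_combination -h
      rw [this]; ring
    · field_simp at h
      have : a * Real.cos (a * T) * Real.sin φW + Real.sin (a * T) * Real.cos φW = 0 := by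
        linear_combination -h
      rw [this]; ring
end

section
/- Let 0 < T < π/2 and π/2 < φ_W < π − T (i.e., (φ_W, T) ∈ D₁ with φ_W ≠ π/2). Then F¹_{φ_W,T} has no roots in the open interval (0,1): F¹_{φ_W,T}(a) ≠ 0 for all a ∈ (0,1). -/
open Real

/-! Writing `x = aT`, the double-angle formulas factor `F¹` as
`-4 (cos φ sin x + a sin φ cos x) (a cos φ sin x + sin φ cos x)`. On `D₁` both factors are
positive: the first because `cos φ > -cos T`, `sin φ > sin T` and `tan (aT) < a tan T`
(strict convexity of `tan`, here obtained from the concavity of `sin` on `[0, π]`), and the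
second because it exceeds `a` times the first, as `cos φ < 0`. -/

lemma mul_sin_lt_mul_sin {q p : ℝ} (hq : 0 < q) (hqp : q < p) (hp : p ≤ π) :
    q * sin p < p * sin q := by
  have hp0 : 0 < p := hq.trans hqp
  have h := strictConcaveOn_sin_Icc.secant_strict_mono (a := 0) ⟨le_rfl, pi_pos.le⟩
    ⟨hq.le, hqp.le.trans hp⟩ ⟨hp0.le, hp⟩ hq.ne' hp0.ne' hqp
  simp only [sin_zero, sub_zero] at h
  rw [div_lt_div_iff₀ hp0 hq] at h
  linarith

lemma sin_mul_mul_cos_lt_mul_sin_mul_cos {a T : ℝ} (ha0 : 0 < a) (ha1 : a < 1) (hT0 : 0 < T)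
    (hT : (1 + a) * T ≤ π) :
    sin (a * T) * cos T < a * (sin T * cos (a * T)) := by
  have h := mul_sin_lt_mul_sin (mul_pos (sub_pos.2 ha1) hT0) (by nlinarith) hT
  rw [show (1 + a) * T = a * T + T by ring, show (1 - a) * T = T - a * T by ring,
    sin_add, sin_sub] at h
  nlinarith

lemma F1_eq_mul (φ T a : ℝ) :
    F1 φ T a = -4 * (cos φ * sin (a * T) + a * sin φ * cos (a * T))
      * (a * cos φ * sin (a * T) + sin φ * cos (a * T)) := by
  rw [F1, show 2 * a * T = 2 * (a * T) by ring, sin_two_mul, cos_two_mul, sin_two_mul,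
    cos_two_mul]
  linear_combination (4 * a * cos φ ^ 2) * sin_sq_add_cos_sq (a * T)
    + (4 * a * cos (a * T) ^ 2) * sin_sq_add_cos_sq φ

theorem F1_no_roots_on_D1_general (φW T : ℝ) (hT0 : 0 < T)
    (hφ1 : Real.pi / 2 < φW) (hφ2 : φW < Real.pi - T) :
    ∀ a ∈ Set.Ioo (0:ℝ) 1, F1 φW T a ≠ 0 := by
  rintro a ⟨ha0, ha1⟩
  have hx0 : 0 < a * T := mul_pos ha0 hT0
  have hxT : a * T < T := mul_lt_of_lt_one_left hT0 ha1
  have hsx : 0 < sin (a * T) := sin_pos_of_pos_of_lt_pi hx0 (by linarith)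
  have hcx : 0 < cos (a * T) := cos_pos_of_mem_Ioo ⟨by linarith, by linarith⟩
  have hcφ : cos φW < 0 := cos_neg_of_pi_div_two_lt_of_lt hφ1 (by linarith)
  have hcT : -cos T < cos φW := by
    have := cos_lt_cos_of_nonneg_of_le_pi hT0.le (by linarith) (show T < π - φW by linarith)
    rwa [cos_pi_sub, neg_lt] at this
  have hsT : sin T < sin φW := by
    have := sin_lt_sin_of_lt_of_le_pi_div_two (by linarith) (by linarith)
      (show T < π - φW by linarith)
    rwa [sin_pi_sub] at this
  have htan := sin_mul_mul_cos_lt_mul_sin_mul_cos ha0 ha1 hT0 (by nlinarith)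
  have h₁ : 0 < cos φW * sin (a * T) + a * sin φW * cos (a * T) := by
    nlinarith [mul_lt_mul_of_pos_right hcT hsx, mul_lt_mul_of_pos_left hsT (mul_pos ha0 hcx)]
  have h₂ : 0 < a * cos φW * sin (a * T) + sin φW * cos (a * T) := by
    have hsφ : 0 < sin φW := (sin_pos_of_pos_of_lt_pi hT0 (by linarith)).trans hsT
    nlinarith [mul_pos (mul_pos (sub_pos.2 ha1) hsφ) hcx, mul_pos ha0 h₁]
  rw [F1_eq_mul]
  exact (mul_neg_of_neg_of_pos (mul_neg_of_neg_of_pos (by norm_num) h₁) h₂).ne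

theorem F1_no_roots_on_D1 (φW T : ℝ) (hT0 : 0 < T) (hT : T < Real.pi / 2)
    (hφ1 : Real.pi / 2 < φW) (hφ2 : φW < Real.pi - T) :
    ∀ a ∈ Set.Ioo (0:ℝ) 1, F1 φW T a ≠ 0 :=
  F1_no_roots_on_D1_general φW T hT0 hφ1 hφ2
end

section
/- Let 0 < T ≤ π/2, 0 < φ_W < π/2, and φ_W + T ≠ π/2 (i.e., (φ_W, T) ∈ D₃). Then F¹_{φ_W,T} has no roots in the open interval (0,1): F¹_{φ_W,T}(a) ≠ 0 for all a ∈ (0,1). -/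
open Real

theorem F1_no_roots_on_D3 (φW T : ℝ) (hT0 : 0 < T) (hT : T ≤ Real.pi / 2)
    (hφ1 : 0 < φW) (hφ2 : φW < Real.pi / 2) (hne : φW + T ≠ Real.pi / 2) :
    ∀ a ∈ Set.Ioo (0:ℝ) 1, F1 φW T a ≠ 0 := by
  rintro a ⟨ha0, ha1⟩
  have h1 : 0 < Real.sin (2 * a * T) :=
    Real.sin_pos_of_pos_of_lt_pi (by positivity) (by nlinarith [Real.pi_pos])
  have h2 : 0 < Real.sin (2 * φW) :=
    Real.sin_pos_of_pos_of_lt_pi (by linarith) (by linarith)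
  have h3 := Real.cos_le_one (2 * a * T)
  have h4 := Real.cos_le_one (2 * φW)
  have h5 := Real.neg_one_le_cos (2 * a * T)
  have h6 := Real.neg_one_le_cos (2 * φW)
  have : F1 φW T a < 0 := by
    unfold F1
    have h7 : Real.cos (2 * a * T) * Real.cos (2 * φW) ≤ 1 := by
      nlinarith [mul_nonneg (by linarith : (0:ℝ) ≤ 1 - Real.cos (2 * a * T))
          (by linarith : (0:ℝ) ≤ 1 + Real.cos (2 * φW)),
        mul_nonneg (by linarith : (0:ℝ) ≤ 1 + Real.cos (2 * a * T))
          (by linarith : (0:ℝ) ≤ 1 - Real.cos (2 * φW))]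
    nlinarith [mul_pos h1 h2, mul_pos (mul_pos ha0 ha0) (mul_pos h1 h2),
      mul_nonneg ha0.le (by linarith : (0:ℝ) ≤ 1 - Real.cos (2 * a * T) * Real.cos (2 * φW))]
  linarith
end

section
/- Let φ_W ∈ (0, π], T ∈ (0, π/2], set φ = −φ_W − T, and assume sin φ ≠ 0. Then there exists a pair (b, c) ∈ ℝ², (b, c) ≠ (0, 0), such that the affine function g(t) = c·t + b satisfies −(1/sin φ)·∫₀ᵀ cos(2|t−s| + φ)·g(s) ds = g(t) for all t ∈ [0,T], if and only if φ_W = π or T = −tan φ_W. (In other words, μ = 1 is an eigenvalue of the integral operator with kernel K(s,t) = −cos(2|t−s| + φ)/sin φ with an affine eigenfunction exactly when (φ_W, T) ∈ D₄ or (φ_W, T) ∈ D₂''.) -/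
/-!
Splitting the integral at `s = t` and integrating `cos (±2 s + θ) * (c s + b)` in closed form,
the operator maps `c s + b` to `-(c t + b) sin φ` plus a combination of `cos 2t` and `sin 2t`
whose coefficients are linear in `(b, c)`. As `cos 2t` and `sin 2t` are linearly independent on
`[0, T]` when `sin T ≠ 0`, the eigen-equation is a homogeneous `2 × 2` linear system, which has a
nonzero solution iff its determinant `sin (φ + T) (sin (φ + T) - T cos (φ + T)) / 2` vanishes.
For `φ + T = -φW` this is `sin φW (sin φW + T cos φW) = 0`.
-/

open Real Set Matrix intervalIntegral

theorem Matrix.exists_pair_ne_zero_mulVec_eq_zero_iff {A : Type*} [CommRing A] [IsDomain A]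
    (M : Matrix (Fin 2) (Fin 2) A) :
    (∃ x y : A, (x, y) ≠ (0, 0) ∧ M *ᵥ ![x, y] = 0) ↔ M.det = 0 := by
  rw [← exists_mulVec_eq_zero_iff]
  constructor
  · rintro ⟨x, y, hxy, hM⟩
    refine ⟨![x, y], fun h => hxy ?_, hM⟩
    simpa using ⟨congrFun h 0, congrFun h 1⟩
  · rintro ⟨v, hv, hM⟩
    refine ⟨v 0, v 1, fun h => hv ?_, ?_⟩
    · ext i; fin_cases i <;> simp_all
    · convert hM
      ext i; fin_cases i <;> rfl

theorem hasDerivAt_affine_mul_cos {k : ℝ} (hk : k ≠ 0) (θ b c s : ℝ) :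
    HasDerivAt (fun s => (c * s + b) * sin (k * s + θ) / k + c * cos (k * s + θ) / k ^ 2)
      (cos (k * s + θ) * (c * s + b)) s := by
  have hin : HasDerivAt (fun s => k * s + θ) k s := by
    simpa using ((hasDerivAt_id s).const_mul k).add_const θ
  have hlin : HasDerivAt (fun s => c * s + b) c s := by
    simpa using ((hasDerivAt_id s).const_mul c).add_const b
  refine (((hlin.mul hin.sin).div_const k).add
    ((hin.cos.const_mul c).div_const (k ^ 2))).congr_deriv ?_
  field_simp
  ring

theorem integral_cos_mul_affine {k : ℝ} (hk : k ≠ 0) (θ b c x y : ℝ) :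
    ∫ s in x..y, cos (k * s + θ) * (c * s + b) =
      ((c * y + b) * sin (k * y + θ) / k + c * cos (k * y + θ) / k ^ 2) -
        ((c * x + b) * sin (k * x + θ) / k + c * cos (k * x + θ) / k ^ 2) :=
  integral_eq_sub_of_hasDerivAt (fun s _ => hasDerivAt_affine_mul_cos hk θ b c s)
    (by apply Continuous.intervalIntegrable; fun_prop)

noncomputable def affineEigenMatrix (φ T : ℝ) : Matrix (Fin 2) (Fin 2) ℝ :=
  !![(sin φ + sin (2 * T + φ)) / 2, (2 * T * sin (2 * T + φ) + cos (2 * T + φ) - cos φ) / 4;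
     (cos φ - cos (2 * T + φ)) / 2, (sin φ + sin (2 * T + φ) - 2 * T * cos (2 * T + φ)) / 4]

theorem integral_cos_two_mul_abs_sub_mul_affine (φ b c : ℝ) {T t : ℝ} (ht0 : 0 ≤ t)
    (htT : t ≤ T) :
    ∫ s in 0..T, cos (2 * |t - s| + φ) * (c * s + b) =
      -(c * t + b) * sin φ + (affineEigenMatrix φ T *ᵥ ![b, c]) 0 * cos (2 * t)
        + (affineEigenMatrix φ T *ᵥ ![b, c]) 1 * sin (2 * t) := by
  have hcont : Continuous fun s => cos (2 * |t - s| + φ) * (c * s + b) := by fun_prop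
  rw [← integral_add_adjacent_intervals (hcont.intervalIntegrable 0 t)
      (hcont.intervalIntegrable t T),
    integral_congr (a := 0) (b := t) (g := fun s => cos (-2 * s + (2 * t + φ)) * (c * s + b)),
    integral_congr (a := t) (b := T) (g := fun s => cos (2 * s + (φ - 2 * t)) * (c * s + b)),
    integral_cos_mul_affine (by norm_num), integral_cos_mul_affine (by norm_num)]
  · rw [show -2 * t + (2 * t + φ) = φ by ring, show -2 * 0 + (2 * t + φ) = 2 * t + φ by ring,
      show 2 * T + (φ - 2 * t) = 2 * T + φ - 2 * t by ring, show 2 * t + (φ - 2 * t) = φ by ring]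
    simp only [affineEigenMatrix, mulVec_fin_two, of_apply, cons_val', cons_val_zero, cons_val_one,
      empty_val', cons_val_fin_one, sin_add, cos_add, sin_sub, cos_sub]
    ring
  · intro s hs
    rw [uIcc_of_le htT] at hs
    simp only [abs_of_nonpos (sub_nonpos.2 hs.1)]
    ring_nf
  · intro s hs
    rw [uIcc_of_le ht0] at hs
    simp only [abs_of_nonneg (sub_nonneg.2 hs.2)]
    ring_nf

theorem det_affineEigenMatrix (φ T : ℝ) :
    (affineEigenMatrix φ T).det = sin (φ + T) * (sin (φ + T) - T * cos (φ + T)) / 2 := by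
  obtain ⟨x, rfl⟩ : ∃ x, φ = x - T := ⟨φ + T, by ring⟩
  rw [affineEigenMatrix, det_fin_two_of, show 2 * T + (x - T) = x + T by ring,
    show x - T + T = x by ring]
  simp only [sin_add, cos_add, sin_sub, cos_sub]
  linear_combination (sin x ^ 2 / 2 - T * sin x * cos x / 2) * sin_sq_add_cos_sq T

theorem forall_mem_Icc_mul_cos_add_mul_sin_eq_zero_iff {T : ℝ} (hT : 0 ≤ T) (hsin : sin T ≠ 0)
    (A B : ℝ) : (∀ t ∈ Icc 0 T, A * cos (2 * t) + B * sin (2 * t) = 0) ↔ A = 0 ∧ B = 0 := by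
  refine ⟨fun h => ?_, by rintro ⟨rfl, rfl⟩; simp⟩
  have hA : A = 0 := by simpa using h 0 ⟨le_rfl, hT⟩
  have hB : B * sin T = 0 := by
    simpa [hA, mul_div_cancel₀] using h (T / 2) ⟨by linarith, by linarith⟩
  exact ⟨hA, (mul_eq_zero.1 hB).resolve_right hsin⟩

theorem affine_eigen_equation_iff {φ T : ℝ} (hφ : sin φ ≠ 0) (hT : 0 ≤ T) (hsT : sin T ≠ 0)
    (b c : ℝ) :
    (∀ t ∈ Icc 0 T, -(1 / sin φ) * ∫ s in 0..T, cos (2 * |t - s| + φ) * (c * s + b) = c * t + b)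
      ↔ affineEigenMatrix φ T *ᵥ ![b, c] = 0 := by
  set u := affineEigenMatrix φ T *ᵥ ![b, c]
  have key : ∀ t ∈ Icc 0 T, (-(1 / sin φ) * ∫ s in 0..T, cos (2 * |t - s| + φ) * (c * s + b)
      = c * t + b ↔ u 0 * cos (2 * t) + u 1 * sin (2 * t) = 0) := by
    intro t ht
    rw [integral_cos_two_mul_abs_sub_mul_affine φ b c ht.1 ht.2]
    field_simp
    constructor <;> intro h <;> linarith
  rw [forall₂_congr key, forall_mem_Icc_mul_cos_add_mul_sin_eq_zero_iff hT hsT]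
  simp [funext_iff, Fin.forall_fin_two]

theorem sin_mul_sin_add_mul_cos_eq_zero_iff {x T : ℝ} (hx0 : 0 < x) (hxπ : x ≤ π) (hT : 0 < T) :
    sin x * (sin x + T * cos x) = 0 ↔ x = π ∨ T = -tan x := by
  rcases hxπ.eq_or_lt with rfl | hlt
  · simp
  have hs : 0 < sin x := sin_pos_of_pos_of_lt_pi hx0 hlt
  rw [mul_eq_zero, or_iff_right hs.ne', or_iff_right hlt.ne, tan_eq_sin_div_cos]
  by_cases hc : cos x = 0
  · simp [hc, hs.ne', hT.ne']
  · field_simp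
    constructor <;> intro h <;> linarith

theorem affine_eigenfunction_mu_one (φW T : ℝ)
    (hφ1 : 0 < φW) (hφ2 : φW ≤ Real.pi) (hT0 : 0 < T) (hT : T ≤ Real.pi / 2)
    (hsin : Real.sin (-φW - T) ≠ 0) :
    (∃ b c : ℝ, (b, c) ≠ ((0:ℝ), (0:ℝ)) ∧
      ∀ t ∈ Set.Icc (0:ℝ) T,
        (-(1 / Real.sin (-φW - T))) *
          (∫ s in (0:ℝ)..T, Real.cos (2 * |t - s| + (-φW - T)) * (c * s + b))
          = c * t + b) ↔
    (φW = Real.pi ∨ T = -Real.tan φW) := by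
  have hsT : sin T ≠ 0 := (sin_pos_of_pos_of_lt_pi hT0 (by linarith [pi_pos])).ne'
  simp_rw [affine_eigen_equation_iff hsin hT0.le hsT, exists_pair_ne_zero_mulVec_eq_zero_iff,
    det_affineEigenMatrix, show -φW - T + T = -φW by ring, sin_neg, cos_neg]
  rw [← sin_mul_sin_add_mul_cos_eq_zero_iff hφ1 hφ2 hT0]
  exact ⟨fun h => by linear_combination 2 * h, fun h => by linear_combination h / 2⟩
end
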